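/- Every 16-vertex C4-free Halin graph H satisfies e(H) ≤ 25. -/

import Mathlib

open SimpleGraph

/-- Degree of a vertex as the `ncard` of its neighbour set. -/
noncomputable def ncDeg {V : Type*} (G : SimpleGraph V) (v : V) : ℕ :=
  (G.neighborSet v).ncard

/-- A leaf is a vertex of degree one. -/
def IsLeaf {V : Type*} (G : SimpleGraph V) (v : V) : Prop :=
  ncDeg G v = 1

/-- A Halin graph, presented by its characteristic tree `T` and outer cycle `C`.
The underlying graph is `T ⊔ C`.  The outer cycle is a `2`-regular connected graph
whose support is exactly the set of leaves of `T`, every non-leaf of `T` has degree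
at least three, and the cycle is compatible with a planar embedding: for every edge
`uv` of `T`, the leaves lying in each component of `T - uv` are consecutive on the
cycle, i.e. they induce a connected subgraph of the cycle. -/
structure HalinGraph (V : Type*) [Fintype V] : Type _ where
  /-- the characteristic tree -/
  T : SimpleGraph V
  /-- the outer cycle -/
  C : SimpleGraph V
  tree_isTree : T.IsTree
  four_le_card : 4 ≤ Fintype.card V
  nonleaf_degree : ∀ v : V, ¬ IsLeaf T v → 3 ≤ ncDeg T v
  support_C : C.support = {v : V | IsLeaf T v}
  two_regular : ∀ v ∈ C.support, ncDeg C v = 2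
  cycle_connected : (C.induce C.support).Connected
  planar : ∀ u v : V, T.Adj u v →
    (C.induce {x : V | IsLeaf T x ∧ (T.deleteEdges {s(u, v)}).Reachable u x}).Connected

/-- The Halin graph itself: the (edge-disjoint) union of the tree and the outer cycle. -/
def HalinGraph.graph {V : Type*} [Fintype V] (H : HalinGraph V) : SimpleGraph V :=
  H.T ⊔ H.C

/-- Number of edges of a graph. -/
noncomputable def eCount {V : Type*} (G : SimpleGraph V) : ℕ :=
  G.edgeSet.ncard

/-- A graph is `C₄`-free iff it contains no cycle of length `4`. -/
def C4Free {V : Type*} (G : SimpleGraph V) : Prop :=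
  ∀ (v : V) (w : G.Walk v v), w.IsCycle → w.length ≠ 4

/-- A semi-branching vertex of the characteristic tree: a non-leaf with at least one
leaf neighbour and at least two non-leaf neighbours. -/
def SemiBranching {V : Type*} (T : SimpleGraph V) (v : V) : Prop :=
  ¬ IsLeaf T v ∧ (∃ x, T.Adj v x ∧ IsLeaf T x) ∧
    ∃ x y : V, x ≠ y ∧ T.Adj v x ∧ T.Adj v y ∧ ¬ IsLeaf T x ∧ ¬ IsLeaf T y

/-!
Let `L` be the number of leaves of `T` and `n = |V|`. The tree and the cycle are edge-disjoint
and `C` has `L` edges, so `e(H) = (n - 1) + L`, and it suffices to show `3 L ≤ 2 (n - 1)`.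

Call a dart `xy` of `C` *spread* if `x` and `y` have no common neighbour in `T`. If both cycle
neighbours of a leaf shared its parent, they would span a `C₄` with it; so every leaf starts a
spread dart. For a spread dart `xy`, the parents `p ≠ q` of `x` and `y` are not adjacent (again
by `C₄`-freeness), so the tree path from `p` to `q` starts with an internal edge separating `x`
from `y`, and ends with another. On the other hand, by planarity the leaves on one side of a tree
edge form an arc of `C`, which is left by at most two cycle darts. Double counting the pairs
(spread dart, internal tree dart separating it) gives
`L ≤ #spread darts ≤ #internal darts = 2 (n - 1) - 2 L`.
-/

open Finset

section

variable {V : Type*} {G : SimpleGraph V}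

theorem ncDeg_eq_degree (v : V) [Fintype (G.neighborSet v)] :
    ncDeg G v = G.degree v := by
  rw [ncDeg, ← Nat.card_coe_set_eq, Nat.card_eq_fintype_card, card_neighborSet_eq_degree]

theorem C4Free.eq_or_eq_of_adj (hG : C4Free G) {a b c d : V} (hab : G.Adj a b)
    (hbc : G.Adj b c) (hcd : G.Adj c d) (hda : G.Adj d a) : a = c ∨ b = d := by
  by_contra! h
  refine hG a (.cons hab (.cons hbc (.cons hcd (.cons hda .nil)))) ?_ rfl
  simp [Walk.cons_isCycle_iff, Walk.isPath_def]
  grind [Adj.ne]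

theorem IsLeaf.existsUnique_adj {x : V} (hx : IsLeaf G x) : ∃! p, G.Adj x p := by
  obtain ⟨p, hp⟩ := Set.ncard_eq_one.mp hx
  refine ⟨p, ?_, fun q hq => ?_⟩
  · exact (Set.ext_iff.mp hp p).mpr rfl
  · exact (Set.ext_iff.mp hp q).mp hq

theorem IsLeaf.eq_of_adj {x p q : V} (hx : IsLeaf G x) (hp : G.Adj x p) (hq : G.Adj x q) :
    p = q :=
  hx.existsUnique_adj.unique hp hq

theorem IsLeaf.not_isLeaf_of_adj [Fintype V] (hG : G.Connected) (hV : 3 ≤ Fintype.card V)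
    {x y : V} (hx : IsLeaf G x) (hxy : G.Adj x y) : ¬ IsLeaf G y := by
  classical
  intro hy
  obtain ⟨w, hw⟩ : ∃ w, w ∉ ({x, y} : Finset V) := by
    by_contra! h
    have := card_le_card (s := univ) fun w _ => h w
    grind [card_univ, card_le_two]
  obtain ⟨d, -, hd, hd'⟩ := (hG.preconnected x w).some.exists_boundary_dart {x, y}
    (by simp) (by simpa using hw)
  rcases hd with hd | hd
  · exact hd' (.inr (hx.eq_of_adj (hd ▸ d.adj) hxy))
  · exact hd' (.inl (hy.eq_of_adj (hd ▸ d.adj) hxy.symm))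

namespace SimpleGraph

theorem Reachable.exists_adj_not_isLeaf {p q : V} (h : G.Reachable p q) (hpq : p ≠ q)
    (hnadj : ¬ G.Adj p q) :
    ∃ a, G.Adj p a ∧ ¬ IsLeaf G a ∧ (G.deleteEdges {s(p, a)}).Reachable a q := by
  obtain ⟨P, hP⟩ := h.exists_isPath
  obtain ⟨a, hpa, Q, rfl⟩ := Walk.exists_eq_cons_of_ne hpq P
  have hpQ := (Walk.cons_isPath_iff hpa Q |>.mp hP).2
  have haq : a ≠ q := by rintro rfl; exact hnadj hpa
  obtain ⟨b, hab, Q', rfl⟩ := Walk.exists_eq_cons_of_ne haq Q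
  refine ⟨a, hpa, fun ha => ?_,
    reachable_deleteEdges_iff_exists_walk.mpr ⟨.cons hab Q', fun he => ?_⟩⟩
  · exact hpQ (by simp [ha.eq_of_adj hpa.symm hab])
  · exact hpQ ((Walk.cons hab Q').fst_mem_support_of_mem_edges he)

theorem card_darts_fst_mem [Fintype V] [DecidableEq V] [DecidableRel G.Adj] (s : Finset V) :
    #{d : G.Dart | d.fst ∈ s} = ∑ x ∈ s, G.degree x := by
  rw [card_eq_sum_card_fiberwise (f := (·.fst)) (t := s) fun d hd => by simpa using hd]
  refine sum_congr rfl fun x hx => ?_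
  rw [filter_filter, ← dart_fst_fiber_card_eq_degree]
  congr 1; ext d
  simp only [mem_filter, mem_univ, true_and, and_iff_right_iff_imp]
  rintro rfl; exact hx

theorem card_boundary_darts_le_two [Fintype V] [DecidableEq V] [DecidableRel G.Adj]
    (s : Finset V) (hdeg : ∀ x ∈ s, G.degree x = 2) (hs : (G.induce (s : Set V)).Connected) :
    #{d : G.Dart | d.fst ∈ s ∧ d.snd ∉ s} ≤ 2 := by
  have hout : #{d : G.Dart | d.fst ∈ s} = 2 * #s := by
    rw [card_darts_fst_mem, sum_congr rfl hdeg, sum_const, smul_eq_mul, mul_comm]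
  have hin : 2 * (#s - 1) ≤ #{d : G.Dart | d.fst ∈ s ∧ d.snd ∈ s} := by
    have hedges := hs.card_vert_le_card_edgeSet_add_one
    simp only [Nat.card_eq_fintype_card, ← edgeFinset_card, coe_sort_coe,
      Fintype.card_coe] at hedges
    calc 2 * (#s - 1) ≤ Fintype.card (G.induce (s : Set V)).Dart := by
          rw [dart_card_eq_twice_card_edges]; omega
      _ ≤ _ := by
        rw [← card_univ]
        refine card_le_card_of_injOn (Embedding.induce (s : Set V)).toHom.mapDart
          (fun d _ => by simp [Hom.mapDart_apply]) fun d _ d' _ h => ?_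
        simp only [Hom.mapDart_apply, Dart.mk.injEq, Prod.map, Prod.ext_iff] at h
        exact Dart.ext _ _ (Prod.ext (Subtype.ext h.1) (Subtype.ext h.2))
  have hsplit := card_filter_add_card_filter_not (s := ({d : G.Dart | d.fst ∈ s} : Finset _))
    (fun d => d.snd ∈ s)
  simp only [filter_filter] at hsplit
  omega

open Classical in
theorem IsTree.card_internal_darts_add [Fintype V] (hG : G.IsTree) (hV : 3 ≤ Fintype.card V) :
    #{e : G.Dart | ¬ IsLeaf G e.fst ∧ ¬ IsLeaf G e.snd} + 2 * #{x | IsLeaf G x} =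
      2 * (Fintype.card V - 1) := by
  have hall : #(univ : Finset G.Dart) = 2 * (Fintype.card V - 1) := by
    rw [card_univ, dart_card_eq_twice_card_edges, ← hG.card_edgeFinset, Nat.add_sub_cancel]
  have hfst : #{e : G.Dart | IsLeaf G e.fst} = #{x | IsLeaf G x} := by
    calc _ = #{e : G.Dart | e.fst ∈ ({x | IsLeaf G x} : Finset V)} := by simp
      _ = ∑ x ∈ {x | IsLeaf G x}, G.degree x := card_darts_fst_mem _
      _ = _ := by
        rw [card_eq_sum_ones]
        exact sum_congr rfl fun x hx => by rw [← ncDeg_eq_degree]; exact (mem_filter.mp hx).2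
  have hsnd : #{e : G.Dart | IsLeaf G e.snd} = #{e : G.Dart | IsLeaf G e.fst} :=
    card_nbij' Dart.symm Dart.symm (fun e he => by simpa using he) (fun e he => by simpa using he)
      (fun e _ => e.symm_symm) (fun e _ => e.symm_symm)
  have hnot : #{e : G.Dart | ¬ IsLeaf G e.fst ∧ IsLeaf G e.snd} =
      #{e : G.Dart | IsLeaf G e.snd} := by
    congr 1
    exact filter_congr fun e _ =>
      and_iff_right_of_imp fun h => h.not_isLeaf_of_adj hG.connected hV e.adj.symm
  have h1 := card_filter_add_card_filter_not (s := univ) (fun e : G.Dart => IsLeaf G e.fst)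
  have h2 := card_filter_add_card_filter_not (s := ({e : G.Dart | ¬ IsLeaf G e.fst} : Finset _))
    (fun e => IsLeaf G e.snd)
  simp only [filter_filter] at h2
  omega

def Dart.Separates (e : G.Dart) (x y : V) : Prop :=
  (G.deleteEdges {e.edge}).Reachable e.fst x ∧ (G.deleteEdges {e.edge}).Reachable e.snd y

theorem Dart.separates_symm {e : G.Dart} {x y : V} : e.symm.Separates y x ↔ e.Separates x y := by
  rw [Dart.Separates, Dart.Separates, Dart.edge_symm, and_comm]
  rfl

end SimpleGraph

end

namespace HalinGraph

open SimpleGraph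
open scoped Classical

variable {V : Type*} [Fintype V] (H : HalinGraph V)

theorem isLeaf_of_C_adj {x y : V} (h : H.C.Adj x y) : IsLeaf H.T x := by
  have : x ∈ H.C.support := ⟨y, h⟩
  rwa [H.support_C] at this

theorem ncDeg_C_of_isLeaf {x : V} (hx : IsLeaf H.T x) : ncDeg H.C x = 2 :=
  H.two_regular x (H.support_C ▸ hx)

theorem not_isLeaf_of_T_adj {x p : V} (hx : IsLeaf H.T x) (h : H.T.Adj x p) :
    ¬ IsLeaf H.T p :=
  hx.not_isLeaf_of_adj H.tree_isTree.connected (by linarith [H.four_le_card]) h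

theorem exists_C_adj_commonNeighbors_eq_empty (hfree : C4Free H.graph) {x : V}
    (hx : IsLeaf H.T x) : ∃ y, H.C.Adj x y ∧ H.T.commonNeighbors x y = ∅ := by
  obtain ⟨y, z, hyz, hxyz⟩ := Set.ncard_eq_two.mp (H.ncDeg_C_of_isLeaf hx)
  have hy : H.C.Adj x y := (Set.ext_iff.mp hxyz y).mpr (.inl rfl)
  have hz : H.C.Adj x z := (Set.ext_iff.mp hxyz z).mpr (.inr rfl)
  by_contra! h
  obtain ⟨p, hp⟩ := h y hy
  obtain ⟨q, hq⟩ := h z hz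
  rw [mem_commonNeighbors] at hp hq
  obtain rfl := hx.eq_of_adj hp.1 hq.1
  rcases hfree.eq_or_eq_of_adj (a := p) (.inl hp.2.symm) (.inr hy.symm) (.inr hz) (.inl hq.2)
    with h | h
  · exact hp.1.ne h.symm
  · exact hyz h

theorem not_T_adj_of_C_adj (hfree : C4Free H.graph) {x y p q : V} (hxy : H.C.Adj x y)
    (hxp : H.T.Adj x p) (hyq : H.T.Adj y q) : ¬ H.T.Adj p q := by
  intro hpq
  have hx := H.isLeaf_of_C_adj hxy
  have hy := H.isLeaf_of_C_adj hxy.symm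
  rcases hfree.eq_or_eq_of_adj (a := x) (.inr hxy) (.inl hyq) (.inl hpq.symm) (.inl hxp.symm)
    with rfl | rfl
  · exact H.not_isLeaf_of_T_adj hy hyq hx
  · exact H.not_isLeaf_of_T_adj hx hxp hy

theorem exists_internal_dart_separates (hfree : C4Free H.graph) {x y : V} (hxy : H.C.Adj x y)
    (hcommon : H.T.commonNeighbors x y = ∅) :
    ∃ e : H.T.Dart, H.T.Adj x e.fst ∧ ¬ IsLeaf H.T e.fst ∧ ¬ IsLeaf H.T e.snd ∧
      e.Separates x y := by
  have hx := H.isLeaf_of_C_adj hxy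
  have hy := H.isLeaf_of_C_adj hxy.symm
  obtain ⟨p, hxp, -⟩ := hx.existsUnique_adj
  obtain ⟨q, hyq, -⟩ := hy.existsUnique_adj
  have hpq : p ≠ q := by
    rintro rfl
    refine (Set.eq_empty_iff_forall_notMem.mp hcommon) p ?_
    rw [mem_commonNeighbors]
    exact ⟨hxp, hyq⟩
  have hp := H.not_isLeaf_of_T_adj hx hxp
  obtain ⟨a, hpa, ha, haq⟩ := (H.tree_isTree.connected.preconnected p q).exists_adj_not_isLeaf
    hpq (H.not_T_adj_of_C_adj hfree hxy hxp hyq)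
  have hpx : (H.T.deleteEdges {s(p, a)}).Adj p x := by
    have : x ≠ a := fun h => ha (h ▸ hx)
    simp [hxp.symm, this, hxp.ne]
  have hqy : (H.T.deleteEdges {s(p, a)}).Adj q y := by
    have : y ≠ p := fun h => hp (h ▸ hy)
    simp [hyq.symm, this, hpq.symm]
  exact ⟨⟨(p, a), hpa⟩, hxp, hp, ha, hpx.reachable, haq.trans hqy.reachable⟩

theorem card_separated_C_darts_le_two (e : H.T.Dart) :
    #{d : H.C.Dart | e.Separates d.fst d.snd} ≤ 2 := by
  set S : Finset V := {x | IsLeaf H.T x ∧ (H.T.deleteEdges {e.edge}).Reachable e.fst x}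
  have hS : (H.C.induce (S : Set V)).Connected := by
    have hS : (S : Set V) =
        {x | IsLeaf H.T x ∧ (H.T.deleteEdges {s(e.fst, e.snd)}).Reachable e.fst x} := by
      ext; simp only [S, coe_filter, mem_univ, true_and]; rfl
    exact hS ▸ H.planar e.fst e.snd e.adj
  have hdeg : ∀ x ∈ S, H.C.degree x = 2 := fun x hx => by
    rw [← ncDeg_eq_degree]
    exact H.ncDeg_C_of_isLeaf (mem_filter.mp hx).2.1
  refine le_trans (card_le_card fun d hd => ?_) (card_boundary_darts_le_two S hdeg hS)
  obtain ⟨hfst, hsnd⟩ := (mem_filter.mp hd).2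
  simp only [mem_filter, mem_univ, true_and, S]
  refine ⟨⟨H.isLeaf_of_C_adj d.adj, hfst⟩, fun h => ?_⟩
  exact isAcyclic_iff_forall_adj_isBridge.mp H.tree_isTree.isAcyclic e.adj (h.2.trans hsnd.symm)

theorem card_leaves_le_card_spread_darts (hfree : C4Free H.graph) :
    #{x | IsLeaf H.T x} ≤ #{d : H.C.Dart | H.T.commonNeighbors d.fst d.snd = ∅} := by
  refine card_le_card_of_forall_subsingleton (fun x (d : H.C.Dart) => d.fst = x)
    (fun x hx => ?_) fun d _ x₁ hx₁ x₂ hx₂ => hx₁.2.symm.trans hx₂.2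
  obtain ⟨y, hxy, hxy'⟩ := H.exists_C_adj_commonNeighbors_eq_empty hfree (mem_filter.mp hx).2
  exact ⟨⟨(x, y), hxy⟩, mem_filter.mpr ⟨mem_univ _, hxy'⟩, rfl⟩

theorem card_spread_darts_le_card_internal_darts (hfree : C4Free H.graph) :
    #{d : H.C.Dart | H.T.commonNeighbors d.fst d.snd = ∅} ≤
      #{e : H.T.Dart | ¬ IsLeaf H.T e.fst ∧ ¬ IsLeaf H.T e.snd} := by
  refine le_of_mul_le_mul_right (card_mul_le_card_mul
    (fun (d : H.C.Dart) (e : H.T.Dart) => e.Separates d.fst d.snd) (fun d hd => ?_)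
    fun e _ => ?_) two_pos
  · have hd := (mem_filter.mp hd).2
    obtain ⟨e₁, hx₁, hf₁, hs₁, hsep₁⟩ := H.exists_internal_dart_separates hfree d.adj hd
    obtain ⟨e₂, hx₂, hf₂, hs₂, hsep₂⟩ :=
      H.exists_internal_dart_separates hfree d.adj.symm (by rwa [commonNeighbors_symm])
    have hne : e₁ ≠ e₂.symm := fun h =>
      H.not_T_adj_of_C_adj hfree d.adj hx₁ hx₂ (by simpa [h] using e₂.adj.symm)
    rw [← card_pair hne]
    refine card_le_card fun e he => ?_
    rcases mem_insert.mp he with rfl | he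
    · simp [bipartiteAbove, hf₁, hs₁, hsep₁]
    · rw [mem_singleton.mp he]
      simp [bipartiteAbove, hf₂, hs₂, Dart.separates_symm.mpr hsep₂]
  · exact (card_le_card (filter_subset_filter _ (subset_univ _))).trans
      (H.card_separated_C_darts_le_two e)

theorem ncard_edgeSet_C : H.C.edgeSet.ncard = #{x | IsLeaf H.T x} := by
  have hdarts : Fintype.card H.C.Dart = 2 * #{x | IsLeaf H.T x} := by
    calc Fintype.card H.C.Dart
          = #{d : H.C.Dart | d.fst ∈ ({x | IsLeaf H.T x} : Finset V)} := by
          rw [filter_true_of_mem fun d _ => by simpa using H.isLeaf_of_C_adj d.adj, card_univ]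
      _ = ∑ x ∈ {x | IsLeaf H.T x}, H.C.degree x := card_darts_fst_mem _
      _ = _ := by
        rw [mul_comm, ← smul_eq_mul, ← sum_const]
        refine sum_congr rfl fun x hx => ?_
        rw [← ncDeg_eq_degree]
        exact H.ncDeg_C_of_isLeaf (mem_filter.mp hx).2
  rw [← coe_edgeFinset, Set.ncard_coe_finset]
  have := dart_card_eq_twice_card_edges (G := H.C)
  omega

theorem eCount_graph : eCount H.graph = (Fintype.card V - 1) + #{x | IsLeaf H.T x} := by
  have hdisj : Disjoint H.T.edgeSet H.C.edgeSet := by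
    rw [Set.disjoint_left, Sym2.forall]
    exact fun x y hT hC => H.not_isLeaf_of_T_adj (H.isLeaf_of_C_adj hC) hT
      (H.isLeaf_of_C_adj (H.C.adj_symm hC))
  rw [eCount, graph, edgeSet_sup, Set.ncard_union_eq hdisj, ncard_edgeSet_C,
    ← coe_edgeFinset, Set.ncard_coe_finset, ← H.tree_isTree.card_edgeFinset, Nat.add_sub_cancel]

theorem three_mul_card_leaves_le (hfree : C4Free H.graph) :
    3 * #{x | IsLeaf H.T x} ≤ 2 * (Fintype.card V - 1) := by
  have := H.tree_isTree.card_internal_darts_add (by linarith [H.four_le_card])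
  have := H.card_leaves_le_card_spread_darts hfree
  have := H.card_spread_darts_le_card_internal_darts hfree
  omega

theorem three_mul_eCount_le (hfree : C4Free H.graph) :
    3 * eCount H.graph ≤ 5 * (Fintype.card V - 1) := by
  have := H.three_mul_card_leaves_le hfree
  rw [eCount_graph]
  omega

end HalinGraph

/-- Every `16`-vertex `C₄`-free Halin graph has at most `25` edges. -/
theorem halin_sixteen {V : Type*} [Fintype V] (hcard : Fintype.card V = 16)
    (H : HalinGraph V) (hfree : C4Free H.graph) :
    eCount H.graph ≤ 25 := by
  have := H.three_mul_eCount_le hfree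
  omega
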